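/- arXiv:math/0702577 — 2 statements merged into one kernel-verified Lean document; each statement's English description precedes it below -/
import Mathlib

section
/- Fix n ≥ 1. The map R(β1,β2) : (X,Y) ↦ (P,Q) on (ℂⁿ×ℂⁿ)², where X=(X¹,X²), Y=(Y¹,Y²) with X¹,X²,Y¹,Y² ∈ ℂⁿ, defined componentwise by P¹ᵢ = Y¹ᵢ/Sᵢ, P²ᵢ = Y²ᵢ·Sᵢ, Q¹ᵢ = X¹ᵢ·Sᵢ, Q²ᵢ = X²ᵢ + Y²ᵢ·(1−Sᵢ), with Sᵢ = 1 + (β1−β2)/(X¹ᵢ·(1 − Σⱼ Y²ⱼ/X¹ⱼ)), satisfies the parameter-dependent Yang–Baxter relation R^{(2,3)}(β2,β3) ∘ R^{(1,3)}(β1,β3) ∘ R^{(1,2)}(β1,β2) = R^{(1,2)}(β1,β2) ∘ R^{(1,3)}(β1,β3) ∘ R^{(2,3)}(β2,β3), as maps on ((ℂⁿ×ℂⁿ))³, at every point where all denominators occurring in both composite maps are nonzero. -/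
noncomputable section

open scoped BigOperators

/-- The phase space `𝕏 = ℂⁿ × ℂⁿ`. -/
abbrev V (n : ℕ) : Type := (Fin n → ℂ) × (Fin n → ℂ)

/-- `Sᵢ = 1 + (β1−β2)/(X¹ᵢ·(1 − Σⱼ Y²ⱼ/X¹ⱼ))` for `z = ((X¹,X²),(Y¹,Y²))`. -/
def Sval {n : ℕ} (β1 β2 : ℂ) (z : V n × V n) (i : Fin n) : ℂ :=
  1 + (β1 - β2) / (z.1.1 i * (1 - ∑ j, z.2.2 j / z.1.1 j))

/-- The n-vector Yang–Baxter map from the lattice n-vector nonlinear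
Schrödinger system: `P¹ᵢ = Y¹ᵢ/Sᵢ`, `P²ᵢ = Y²ᵢ·Sᵢ`, `Q¹ᵢ = X¹ᵢ·Sᵢ`,
`Q²ᵢ = X²ᵢ + Y²ᵢ·(1−Sᵢ)`. -/
def R {n : ℕ} (β1 β2 : ℂ) (z : V n × V n) : V n × V n :=
  ((fun i => z.2.1 i / Sval β1 β2 z i, fun i => z.2.2 i * Sval β1 β2 z i),
   (fun i => z.1.1 i * Sval β1 β2 z i,
    fun i => z.1.2 i + z.2.2 i * (1 - Sval β1 β2 z i)))

/-- All denominators occurring in `R(β1,β2)` are nonzero at `z`. -/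
def D {n : ℕ} (β1 β2 : ℂ) (z : V n × V n) : Prop :=
  (∀ j, z.1.1 j ≠ 0) ∧
    (∀ i, z.1.1 i * (1 - ∑ j, z.2.2 j / z.1.1 j) ≠ 0) ∧
    (∀ i, Sval β1 β2 z i ≠ 0)

/-- `R` acting on factors 1,2 of a triple. -/
def R12 {n : ℕ} (β1 β2 : ℂ) (w : V n × V n × V n) : V n × V n × V n :=
  ((R β1 β2 (w.1, w.2.1)).1, (R β1 β2 (w.1, w.2.1)).2, w.2.2)

/-- `R` acting on factors 1,3 of a triple. -/
def R13 {n : ℕ} (β1 β2 : ℂ) (w : V n × V n × V n) : V n × V n × V n :=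
  ((R β1 β2 (w.1, w.2.2)).1, w.2.1, (R β1 β2 (w.1, w.2.2)).2)

/-- `R` acting on factors 2,3 of a triple. -/
def R23 {n : ℕ} (β1 β2 : ℂ) (w : V n × V n × V n) : V n × V n × V n :=
  (w.1, (R β1 β2 (w.2.1, w.2.2)).1, (R β1 β2 (w.2.1, w.2.2)).2)

/-!
Because `Sᵢ = (X¹ᵢ + t) / X¹ᵢ` with one scalar `t = (β₁ - β₂) / σ`, `σ = 1 - Σⱼ Y²ⱼ / X¹ⱼ`,
shared by all components, `R` acts componentwise as a map `localR t` that depends on the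
point only through `t`. Along both sides of the Yang–Baxter relation the three scalars are
rational functions of `p = σ(X, Y)`, `q = σ(Y, Z)` and `E = Σⱼ Z²ⱼ / (X¹ⱼ Y¹ⱼ)`: on the left
`t₁ = k₁/p`, `t₂ = k₃/(q - t₁E)`, `t₃ = k₂/(p + t₂E)`, on the right `s₁ = k₂/q`,
`s₂ = k₃/(p + s₁E)`, `s₃ = k₁/(q - s₂E)`, where `k₁ = β₁ - β₂`, `k₂ = β₂ - β₃`, `k₃ = k₁ + k₂`.
They satisfy `s₂ = t₁ + t₃`, `t₂ = s₁ + s₃` and `t₁ s₁ = t₃ s₃`, and under these three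
relations the componentwise maps satisfy the Yang–Baxter relation by a direct computation.
-/

namespace VectorNLS

variable {n : ℕ}

lemma one_sub_sum_eq_of_eq_add_mul {ι K : Type*} [Fintype ι] [CommRing K] {f g h : ι → K}
    (τ : K) (hf : ∀ j, f j = g j + τ * h j) : 1 - ∑ j, f j = 1 - ∑ j, g j - τ * ∑ j, h j := by
  simp only [hf, Finset.sum_add_distrib, Finset.mul_sum]
  ring

def sigma (z : V n × V n) : ℂ :=
  1 - ∑ j, z.2.2 j / z.1.1 j

def crossSum (w : V n × V n × V n) : ℂ :=
  ∑ j, w.2.2.2 j / (w.1.1 j * w.2.1.1 j)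

def localR (t : ℂ) (z : V n × V n) : V n × V n :=
  ((fun i => z.2.1 i * z.1.1 i / (z.1.1 i + t), fun i => z.2.2 i * (z.1.1 i + t) / z.1.1 i),
   (fun i => z.1.1 i + t, fun i => z.1.2 i - t * z.2.2 i / z.1.1 i))

def localD (t : ℂ) (z : V n × V n) : Prop :=
  (∀ i, z.1.1 i ≠ 0) ∧ ∀ i, z.1.1 i + t ≠ 0

def on12 (f : V n × V n → V n × V n) (w : V n × V n × V n) : V n × V n × V n :=
  ((f (w.1, w.2.1)).1, (f (w.1, w.2.1)).2, w.2.2)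

def on13 (f : V n × V n → V n × V n) (w : V n × V n × V n) : V n × V n × V n :=
  ((f (w.1, w.2.2)).1, w.2.1, (f (w.1, w.2.2)).2)

def on23 (f : V n × V n → V n × V n) (w : V n × V n × V n) : V n × V n × V n :=
  (w.1, (f (w.2.1, w.2.2)).1, (f (w.2.1, w.2.2)).2)

lemma Sval_eq {β₁ β₂ : ℂ} {z : V n × V n} {i : Fin n} (hx : z.1.1 i ≠ 0) :
    Sval β₁ β₂ z i = (z.1.1 i + (β₁ - β₂) / sigma z) / z.1.1 i := by
  rw [Sval, sigma, add_div, div_self hx, div_div, mul_comm]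

lemma R_eq_localR {β₁ β₂ : ℂ} {z : V n × V n} (hx : ∀ j, z.1.1 j ≠ 0) :
    R β₁ β₂ z = localR ((β₁ - β₂) / sigma z) z := by
  ext i <;> simp only [R, localR, Sval_eq (hx i)] <;> field_simp [hx i]
  ring

lemma D.sigma_ne_zero {β₁ β₂ : ℂ} {z : V n × V n} (h : D β₁ β₂ z) (i : Fin n) : sigma z ≠ 0 :=
  right_ne_zero_of_mul (h.2.1 i)

lemma D.localD {β₁ β₂ : ℂ} {z : V n × V n} (h : D β₁ β₂ z) : localD ((β₁ - β₂) / sigma z) z :=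
  ⟨h.1, fun i hi => h.2.2 i (by rw [Sval_eq (h.1 i), hi, zero_div])⟩

lemma R12_eq_on12 {β₁ β₂ : ℂ} {w : V n × V n × V n} (h : D β₁ β₂ (w.1, w.2.1)) :
    R12 β₁ β₂ w = on12 (localR ((β₁ - β₂) / sigma (w.1, w.2.1))) w := by
  rw [R12, R_eq_localR h.1, on12]

lemma R13_eq_on13 {β₁ β₂ : ℂ} {w : V n × V n × V n} (h : D β₁ β₂ (w.1, w.2.2)) :
    R13 β₁ β₂ w = on13 (localR ((β₁ - β₂) / sigma (w.1, w.2.2))) w := by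
  rw [R13, R_eq_localR h.1, on13]

lemma R23_eq_on23 {β₁ β₂ : ℂ} {w : V n × V n × V n} (h : D β₁ β₂ (w.2.1, w.2.2)) :
    R23 β₁ β₂ w = on23 (localR ((β₁ - β₂) / sigma (w.2.1, w.2.2))) w := by
  rw [R23, R_eq_localR h.1, on23]

section sigma

variable {t t' : ℂ} {w : V n × V n × V n}

lemma sigma_on12 (hx : ∀ j, w.1.1 j ≠ 0) :
    sigma ((on12 (localR t) w).1, (on12 (localR t) w).2.2) =
      sigma (w.2.1, w.2.2) - t * crossSum w := by
  refine one_sub_sum_eq_of_eq_add_mul t fun j => ?_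
  simp only [on12, localR]
  field_simp [hx j]

lemma sigma_on13_on12 (hxt : ∀ j, w.1.1 j + t ≠ 0) :
    sigma ((on13 (localR t') (on12 (localR t) w)).2.1,
        (on13 (localR t') (on12 (localR t) w)).2.2) =
      sigma (w.1, w.2.1) + t' * crossSum w := by
  rw [← sub_neg_eq_add, ← neg_mul]
  refine one_sub_sum_eq_of_eq_add_mul (-t') fun j => ?_
  simp only [on12, on13, localR]
  field_simp [hxt j]
  ring

lemma sigma_on23 :
    sigma ((on23 (localR t) w).1, (on23 (localR t) w).2.2) =
      sigma (w.1, w.2.1) + t * crossSum w := by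
  rw [← sub_neg_eq_add, ← neg_mul]
  refine one_sub_sum_eq_of_eq_add_mul (-t) fun j => ?_
  simp only [on23, localR]
  field_simp
  ring

lemma sigma_on13_on23 (hx : ∀ j, w.1.1 j ≠ 0) (hys : ∀ j, w.2.1.1 j + t ≠ 0) :
    sigma ((on13 (localR t') (on23 (localR t) w)).1,
        (on13 (localR t') (on23 (localR t) w)).2.1) =
      sigma (w.2.1, w.2.2) - t' * crossSum w := by
  refine one_sub_sum_eq_of_eq_add_mul t' fun j => ?_
  simp only [on23, on13, localR]
  field_simp [hx j, hys j]

end sigma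

lemma parameter_relations {k₁ k₂ k₃ p q E t₁ t₂ t₃ s₁ s₂ s₃ : ℂ} (hk : k₃ = k₁ + k₂)
    (hp : p ≠ 0) (hq : q ≠ 0) (h₁ : q - t₁ * E ≠ 0) (h₂ : p + t₂ * E ≠ 0)
    (ht₁ : t₁ = k₁ / p) (ht₂ : t₂ = k₃ / (q - t₁ * E)) (ht₃ : t₃ = k₂ / (p + t₂ * E))
    (hs₁ : s₁ = k₂ / q) (hs₂ : s₂ = k₃ / (p + s₁ * E)) (hs₃ : s₃ = k₁ / (q - s₂ * E)) :
    s₂ = t₁ + t₃ ∧ t₂ = s₁ + s₃ ∧ t₁ * s₁ = t₃ * s₃ := by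
  subst hk
  have hq₁ : q - t₁ * E = (p * q - k₁ * E) / p := by rw [ht₁]; field_simp
  have hΔ₁ : p * q - k₁ * E ≠ 0 := fun h => h₁ (by rw [hq₁, h, zero_div])
  have ht₂' : t₂ = (k₁ + k₂) * p / (p * q - k₁ * E) := by rw [ht₂, hq₁, div_div_eq_mul_div]
  have hp₂ : p + t₂ * E = p * (p * q + k₂ * E) / (p * q - k₁ * E) := by
    rw [ht₂']; field_simp; ring
  have hΔ₂ : p * q + k₂ * E ≠ 0 := fun h => h₂ (by rw [hp₂, h, mul_zero, zero_div])
  have ht₃' : t₃ = k₂ * (p * q - k₁ * E) / (p * (p * q + k₂ * E)) := by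
    rw [ht₃, hp₂, div_div_eq_mul_div]
  have hp₁ : p + s₁ * E = (p * q + k₂ * E) / q := by rw [hs₁]; field_simp
  have hs₂' : s₂ = (k₁ + k₂) * q / (p * q + k₂ * E) := by rw [hs₂, hp₁, div_div_eq_mul_div]
  have hq₂ : q - s₂ * E = q * (p * q - k₁ * E) / (p * q + k₂ * E) := by
    rw [hs₂', eq_div_iff hΔ₂, sub_mul, div_mul_eq_mul_div, div_mul_cancel₀ _ hΔ₂]
    ring
  have hs₃' : s₃ = k₁ * (p * q + k₂ * E) / (q * (p * q - k₁ * E)) := by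
    rw [hs₃, hq₂, div_div_eq_mul_div]
  rw [ht₁, ht₂', ht₃', hs₁, hs₂', hs₃']
  refine ⟨?_, ?_, ?_⟩
  · rw [div_add_div _ _ hp (mul_ne_zero hp hΔ₂), div_eq_div_iff hΔ₂ (by positivity)]
    ring
  · rw [div_add_div _ _ hq (mul_ne_zero hq hΔ₁), div_eq_div_iff hΔ₁ (by positivity)]
    ring
  · rw [div_mul_div_comm, div_mul_div_comm, div_eq_div_iff (by positivity) (by positivity)]
    ring

theorem localR_yangBaxter {t₁ t₂ t₃ s₁ s₂ s₃ : ℂ} {w : V n × V n × V n}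
    (hL1 : localD t₁ (w.1, w.2.1))
    (hL2 : localD t₂ ((on12 (localR t₁) w).1, (on12 (localR t₁) w).2.2))
    (hR1 : localD s₁ (w.2.1, w.2.2))
    (hR2 : localD s₂ ((on23 (localR s₁) w).1, (on23 (localR s₁) w).2.2))
    (h : s₂ = t₁ + t₃ ∧ t₂ = s₁ + s₃ ∧ t₁ * s₁ = t₃ * s₃) :
    on23 (localR t₃) (on13 (localR t₂) (on12 (localR t₁) w)) =
      on12 (localR s₃) (on13 (localR s₂) (on23 (localR s₁) w)) := by
  obtain ⟨⟨x, a⟩, ⟨y, b⟩, ⟨z, c⟩⟩ := w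
  obtain ⟨rfl, rfl, hts⟩ := h
  simp only [localD, on12, on13, on23, localR] at *
  obtain ⟨hx, hxt₁⟩ := hL1
  obtain ⟨-, hyxt₂⟩ := hL2
  obtain ⟨hy, hys₁⟩ := hR1
  obtain ⟨-, hxs₂⟩ := hR2
  have hkey (i : Fin n) :
      y i * x i + (x i + t₁) * (s₁ + s₃) = x i * (y i + s₁) + s₃ * (x i + (t₁ + t₃)) := by
    linear_combination hts
  have hN (i : Fin n) : y i * x i + (x i + t₁) * (s₁ + s₃) ≠ 0 := by
    intro h; apply hyxt₂ i; field_simp [hxt₁ i]; linear_combination h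
  have hN' (i : Fin n) : x i * (y i + s₁) + s₃ * (x i + (t₁ + t₃)) ≠ 0 := by
    rw [← hkey]; exact hN i
  ext i <;> field_simp [hx i, hy i, hxt₁ i, hys₁ i, hxs₂ i, hN i, hN' i]
  · rw [hkey]
  · rw [hkey]
  · rw [hkey, add_assoc, mul_div_cancel_right₀ _ (hxs₂ i)]
  · ring
  · ring
  · linear_combination (-c i) * hts

end VectorNLS

open VectorNLS

/-- The parameter-dependent Yang–Baxter relation for the n-vector Yang–Baxter
map obtained from the lattice n-vector nonlinear Schrödinger system, at every
point where all denominators occurring in both composite maps are nonzero. -/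
theorem yang_baxter_vector_NLS (n : ℕ) (hn : 1 ≤ n) (β1 β2 β3 : ℂ)
    (w : V n × V n × V n)
    (hL1 : D β1 β2 (w.1, w.2.1))
    (hL2 : D β1 β3 ((R12 β1 β2 w).1, (R12 β1 β2 w).2.2))
    (hL3 : D β2 β3 ((R13 β1 β3 (R12 β1 β2 w)).2.1, (R13 β1 β3 (R12 β1 β2 w)).2.2))
    (hR1 : D β2 β3 (w.2.1, w.2.2))
    (hR2 : D β1 β3 ((R23 β2 β3 w).1, (R23 β2 β3 w).2.2))
    (hR3 : D β1 β2 ((R13 β1 β3 (R23 β2 β3 w)).1, (R13 β1 β3 (R23 β2 β3 w)).2.1)) :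
    R23 β2 β3 (R13 β1 β3 (R12 β1 β2 w)) = R12 β1 β2 (R13 β1 β3 (R23 β2 β3 w)) := by
  have i₀ : Fin n := ⟨0, hn⟩
  rw [R12_eq_on12 hL1] at hL2 hL3 ⊢
  rw [R13_eq_on13 hL2] at hL3 ⊢
  rw [R23_eq_on23 hL3]
  rw [R23_eq_on23 hR1] at hR2 hR3 ⊢
  rw [R13_eq_on13 hR2] at hR3 ⊢
  rw [R12_eq_on12 hR3]
  refine localR_yangBaxter hL1.localD hL2.localD hR1.localD hR2.localD
    (parameter_relations (k₃ := β1 - β3) (E := crossSum w) (by ring)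
      (hL1.sigma_ne_zero i₀) (hR1.sigma_ne_zero i₀) ?_ ?_ rfl ?_ ?_ rfl ?_ ?_)
  · rw [← sigma_on12 hL1.1]
    exact hL2.sigma_ne_zero i₀
  · rw [← sigma_on13_on12 hL1.localD.2]
    exact hL3.sigma_ne_zero i₀
  · rw [sigma_on12 hL1.1]
  · rw [sigma_on13_on12 hL1.localD.2]
  · rw [sigma_on23]
  · rw [sigma_on13_on23 hL1.1 hR1.localD.2]
end
end

section
/- Fix n ≥ 1. The map R(β1,β2) : (X,Y) ↦ (P,Q) on (ℂⁿ×ℂⁿ)² defined componentwise by P¹ᵢ = Y¹ᵢ/Sᵢ, P²ᵢ = Y²ᵢ·Sᵢ, Q¹ᵢ = X¹ᵢ·Sᵢ, Q²ᵢ = X²ᵢ + Y²ᵢ·(1−Sᵢ), with Sᵢ = 1 + (β1−β2)/(X¹ᵢ·(1 − Σⱼ Y²ⱼ/X¹ⱼ)), is unitary: for all X,Y ∈ ℂⁿ×ℂⁿ with all occurring denominators nonzero, if R(β1,β2)(X,Y) = (P,Q) then R(β2,β1)(Q,P) = (Y,X). -/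
noncomputable section

open scoped BigOperators

/-!
Write `d = X¹ᵢ(1 − σ)` with `σ = Σⱼ Y²ⱼ/X¹ⱼ`, so that `Sᵢ = 1 + (β1 − β2)/d`. Since `R` scales
both `Y²ⱼ` and `X¹ⱼ` by `Sⱼ`, the swapped image `(Q, P)` has the same `σ`, and its denominator is
`Sᵢ d = d + (β1 − β2)`. Hence the multiplier of `R(β2,β1)` at `(Q, P)` is
`1 + (β2 − β1)/(d + β1 − β2) = Sᵢ⁻¹`, which undoes every component of `R(β1,β2)`.
-/

theorem Finset.sum_mul_div_mul_right {ι K : Type*} [DivisionRing K] (s : Finset ι)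
    (a b c : ι → K) (hc : ∀ j ∈ s, c j ≠ 0) :
    ∑ j ∈ s, a j * c j / (b j * c j) = ∑ j ∈ s, a j / b j :=
  Finset.sum_congr rfl fun j hj => mul_div_mul_right _ _ (hc j hj)

theorem one_add_sub_div_eq_inv {K : Type*} [Field K] {a b d : K} (hd : d ≠ 0)
    (hs : 1 + (a - b) / d ≠ 0) :
    1 + (b - a) / ((1 + (a - b) / d) * d) = (1 + (a - b) / d)⁻¹ := by
  have hsd : (1 + (a - b) / d) * d = d + (a - b) := by field_simp
  have hne : d + (a - b) ≠ 0 := hsd ▸ mul_ne_zero hs hd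
  rw [hsd]
  refine eq_inv_of_mul_eq_one_left ?_
  field_simp
  ring

theorem Sval_swap_R {n : ℕ} {β1 β2 : ℂ} {z : V n × V n} (hz : D β1 β2 z) (i : Fin n) :
    Sval β2 β1 (R β1 β2 z).swap i = (Sval β1 β2 z i)⁻¹ := by
  obtain ⟨-, hd, hS⟩ := hz
  set S := Sval β1 β2 z
  have hσ : ∑ j, z.2.2 j * S j / (z.1.1 j * S j) = ∑ j, z.2.2 j / z.1.1 j :=
    Finset.sum_mul_div_mul_right _ _ _ _ fun j _ => hS j
  have hden : z.1.1 i * S i * (1 - ∑ j, z.2.2 j / z.1.1 j)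
      = S i * (z.1.1 i * (1 - ∑ j, z.2.2 j / z.1.1 j)) := by ring
  change 1 + (β2 - β1) / (z.1.1 i * S i * (1 - ∑ j, z.2.2 j * S j / (z.1.1 j * S j))) = _
  rw [hσ, hden]
  exact one_add_sub_div_eq_inv (hd i) (hS i)

theorem R_swap_R_eq_swap {n : ℕ} {β1 β2 : ℂ} {z : V n × V n} (hz : D β1 β2 z) :
    R β2 β1 (R β1 β2 z).swap = z.swap := by
  have hS := hz.2.2
  have hS' := Sval_swap_R hz
  refine Prod.ext (Prod.ext ?_ ?_) (Prod.ext ?_ ?_) <;> funext i <;>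
    simp only [R, Prod.swap] at hS' ⊢ <;> rw [hS' i]
  · rw [div_div, mul_inv_cancel₀ (hS i), div_one]
  · rw [mul_inv_cancel_right₀ (hS i)]
  · rw [mul_inv_cancel_right₀ (hS i)]
  · field_simp [hS i]
    ring

theorem unitarity_vector_NLS_general (n : ℕ) (β1 β2 : ℂ) (X Y : V n)
    (h1 : D β1 β2 (X, Y)) :
    R β2 β1 ((R β1 β2 (X, Y)).2, (R β1 β2 (X, Y)).1) = (Y, X) :=
  R_swap_R_eq_swap h1

/-- Unitarity of the n-vector Yang–Baxter map obtained from the lattice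
n-vector nonlinear Schrödinger system: if `R(β1,β2)(X,Y) = (P,Q)`, then
`R(β2,β1)(Q,P) = (Y,X)`, wherever all occurring denominators are nonzero. -/
theorem unitarity_vector_NLS (n : ℕ) (hn : 1 ≤ n) (β1 β2 : ℂ) (X Y : V n)
    (h1 : D β1 β2 (X, Y))
    (h2 : D β2 β1 ((R β1 β2 (X, Y)).2, (R β1 β2 (X, Y)).1)) :
    R β2 β1 ((R β1 β2 (X, Y)).2, (R β1 β2 (X, Y)).1) = (Y, X) :=
  unitarity_vector_NLS_general n β1 β2 X Y h1
end
end
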